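/- arXiv:2001.00142 — 5 statements merged into one kernel-verified Lean document; each statement's English description precedes it below -/
import Mathlib

section
/- Let R be a commutative noetherian ring and let I and J be injective R-modules. Then the R-module Hom_R(I, J) of R-linear maps from I to J is both flat and pure injective. -/
universe u

open TensorProduct

/-- A pure monomorphism of `R`-modules: an injective `R`-linear map `f : A → B` such that
for every `R`-module `Q` the induced map `Q ⊗[R] A → Q ⊗[R] B` is injective. -/
def IsPureMono {R : Type u} [CommRing R] {A B : Type u}
    [AddCommGroup A] [AddCommGroup B] [Module R A] [Module R B]
    (f : A →ₗ[R] B) : Prop :=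
  Function.Injective f ∧
    ∀ (Q : Type u) [AddCommGroup Q] [Module R Q],
      Function.Injective (LinearMap.lTensor Q f)

/-- An `R`-module `P` is pure injective if every `R`-linear map `A → P` extends along
every pure monomorphism `A → B`. -/
def IsPureInjective (R : Type u) [CommRing R] (P : Type u)
    [AddCommGroup P] [Module R P] : Prop :=
  ∀ ⦃A B : Type u⦄ [AddCommGroup A] [AddCommGroup B] [Module R A] [Module R B]
    (f : A →ₗ[R] B), IsPureMono f → ∀ g : A →ₗ[R] P, ∃ h : B →ₗ[R] P, h ∘ₗ f = g

/-- An `R`-module `M` is absolutely pure if every injective `R`-linear map with domain `M`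
is a pure monomorphism. -/
def IsAbsolutelyPure (R : Type u) [CommRing R] (M : Type u)
    [AddCommGroup M] [Module R M] : Prop :=
  ∀ (N : Type u) [AddCommGroup N] [Module R N] (f : M →ₗ[R] N),
    Function.Injective f → IsPureMono f

/-- An `R`-module `C` is cotorsion if every short exact sequence `0 → C → G → F' → 0`
with flat `F'` splits. -/
def IsCotorsion (R : Type u) [CommRing R] (C : Type u)
    [AddCommGroup C] [Module R C] : Prop :=
  ∀ (G : Type u) [AddCommGroup G] [Module R G] (i : C →ₗ[R] G),
    Function.Injective i → Module.Flat R (G ⧸ LinearMap.range i) →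
      ∃ r : G →ₗ[R] C, r ∘ₗ i = LinearMap.id

/-- The canonical evaluation map from a module to its double character module. -/
def evalCharacterHom (R : Type u) [CommRing R] (M : Type u)
    [AddCommGroup M] [Module R M] :
    M →ₗ[R] CharacterModule (CharacterModule M) where
  toFun m :=
    { toFun := fun φ => φ m
      map_zero' := rfl
      map_add' := fun _ _ => rfl }
  map_add' m n := by ext φ; exact map_add φ m n
  map_smul' r m := by
    ext φ
    show φ (r • m) = (r • φ) m
    rw [CharacterModule.smul_apply]

open LinearMap

section Aux

variable {R : Type u} [CommRing R] {I J : Type u}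
  [AddCommGroup I] [Module R I] [AddCommGroup J] [Module R J]

noncomputable def etaMap (N : Type u) [AddCommGroup N] [Module R N] :
    N ⊗[R] (I →ₗ[R] J) →ₗ[R] ((N →ₗ[R] I) →ₗ[R] J) :=
  TensorProduct.lift (((LinearMap.llcomp R (N →ₗ[R] I) I J).flip).comp
    (LinearMap.applyₗ (R := R) (M := N) (M₂ := I)))

@[simp] lemma etaMap_tmul (N : Type u) [AddCommGroup N] [Module R N]
    (n : N) (φ : I →ₗ[R] J) (ψ : N →ₗ[R] I) :
    etaMap N (n ⊗ₜ φ) ψ = φ (ψ n) := rfl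

lemma etaMap_natural {N N' : Type u} [AddCommGroup N] [Module R N]
    [AddCommGroup N'] [Module R N'] (u : N →ₗ[R] N')
    (x : N ⊗[R] (I →ₗ[R] J)) (ψ : N' →ₗ[R] I) :
    etaMap N' (LinearMap.rTensor (I →ₗ[R] J) u x) ψ = etaMap N x (ψ ∘ₗ u) := by
  induction x using TensorProduct.induction_on with
  | zero => simp
  | tmul n φ => simp
  | add a b ha hb => simp [ha, hb]

/-- `y ↦ (v ↦ v j • y)` as a linear map `I →ₗ ((Fin n → R) →ₗ I)`. -/
noncomputable def coordMap (n : ℕ) (j : Fin n) : I →ₗ[R] ((Fin n → R) →ₗ[R] I) where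
  toFun y := (LinearMap.proj j).smulRight y
  map_add' y z := by
    refine LinearMap.ext fun v => ?_
    simp only [LinearMap.smulRight_apply, LinearMap.add_apply, smul_add]
  map_smul' r y := by
    refine LinearMap.ext fun v => ?_
    simp only [LinearMap.smulRight_apply, RingHom.id_apply, LinearMap.smul_apply,
      LinearMap.proj_apply]
    rw [smul_comm]

@[simp] lemma coordMap_apply (n : ℕ) (j : Fin n) (y : I) (v : Fin n → R) :
    coordMap (R := R) n j y v = v j • y := rfl

/-- One-sided inverse of `etaMap` on a finite free module. -/
noncomputable def thetaMap (n : ℕ) :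
    (((Fin n → R) →ₗ[R] I) →ₗ[R] J) →ₗ[R] (Fin n → R) ⊗[R] (I →ₗ[R] J) :=
  ∑ j : Fin n, (TensorProduct.mk R (Fin n → R) (I →ₗ[R] J) (Pi.single j 1)).comp
    (LinearMap.lcomp R J (coordMap n j))

lemma theta_etaMap (n : ℕ) (x : (Fin n → R) ⊗[R] (I →ₗ[R] J)) :
    thetaMap n (etaMap (Fin n → R) x) = x := by
  induction x using TensorProduct.induction_on with
  | zero => simp
  | tmul v φ =>
    have h1 : ∀ j : Fin n,
        (LinearMap.lcomp R J (coordMap n j)) (etaMap (Fin n → R) (v ⊗ₜ φ)) = v j • φ := by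
      intro j; ext y; simp
    simp only [thetaMap, LinearMap.sum_apply, LinearMap.comp_apply, h1]
    have : ∀ j : Fin n,
        (TensorProduct.mk R (Fin n → R) (I →ₗ[R] J) (Pi.single j 1)) (v j • φ)
          = (Pi.single j (v j) : Fin n → R) ⊗ₜ[R] φ := by
      intro j
      rw [TensorProduct.mk_apply, TensorProduct.tmul_smul, TensorProduct.smul_tmul']
      congr 1
      ext k
      by_cases h : k = j
      · subst h; simp
      · simp [Pi.single_apply, h]
    rw [Finset.sum_congr rfl fun j _ => this j, ← TensorProduct.sum_tmul,
      Finset.univ_sum_single]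
  | add a b ha hb => simp [map_add, ha, hb]

lemma eta_thetaMap (n : ℕ) (α : ((Fin n → R) →ₗ[R] I) →ₗ[R] J) :
    etaMap (Fin n → R) (thetaMap n α) = α := by
  ext ψ
  have expand : ∑ j : Fin n, coordMap (R := R) (I := I) n j (ψ (Pi.single j 1)) = ψ := by
    refine LinearMap.ext fun v => ?_
    simp only [LinearMap.sum_apply, coordMap_apply]
    have h1 : ∀ j : Fin n, v j • ψ (Pi.single j 1) = ψ (Pi.single j (v j)) := by
      intro j
      rw [← map_smul]
      congr 1
      ext k
      by_cases h : k = j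
      · subst h; simp
      · simp [Pi.single_apply, h]
    rw [Finset.sum_congr rfl fun j _ => h1 j, ← map_sum, Finset.univ_sum_single]
  calc etaMap (Fin n → R) (thetaMap n α) ψ
      = ∑ j : Fin n, α (coordMap n j (ψ (Pi.single j 1))) := by
        simp [thetaMap, map_sum]
    _ = α ψ := by rw [← map_sum, expand]

/-- Factor a linear map through a surjection whose kernel it kills. -/
lemma factor_through_surjective {X Y W : Type u}
    [AddCommGroup X] [Module R X] [AddCommGroup Y] [Module R Y]
    [AddCommGroup W] [Module R W]
    (u : X →ₗ[R] Y) (hu : Function.Surjective u) (χ : X →ₗ[R] W)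
    (h : LinearMap.ker u ≤ LinearMap.ker χ) : ∃ ψ : Y →ₗ[R] W, ψ ∘ₗ u = χ := by
  refine ⟨((LinearMap.ker u).liftQ χ h) ∘ₗ (u.quotKerEquivOfSurjective hu).symm, ?_⟩
  refine LinearMap.ext fun x => ?_
  have : (u.quotKerEquivOfSurjective hu).symm (u x) = Submodule.Quotient.mk x := by
    apply (u.quotKerEquivOfSurjective hu).injective
    rw [LinearEquiv.apply_symm_apply]
    rfl
  simp [this]

/-- Factor a linear map into an injective module through any map whose kernel it kills. -/
lemma factor_through_injective (hJ : Module.Injective R J) {X Y : Type u}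
    [AddCommGroup X] [Module R X] [AddCommGroup Y] [Module R Y]
    (u : X →ₗ[R] Y) (β : X →ₗ[R] J)
    (h : LinearMap.ker u ≤ LinearMap.ker β) : ∃ α : Y →ₗ[R] J, α ∘ₗ u = β := by
  set δ : LinearMap.range u →ₗ[R] J :=
    ((LinearMap.ker u).liftQ β h) ∘ₗ (u.quotKerEquivRange).symm with hδ
  obtain ⟨α, hα⟩ := hJ.out (LinearMap.range u).subtype (Submodule.injective_subtype _) δ
  refine ⟨α, LinearMap.ext fun x => ?_⟩
  have h2 : (u.quotKerEquivRange).symm ⟨u x, LinearMap.mem_range_self u x⟩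
      = Submodule.Quotient.mk x := by
    apply (u.quotKerEquivRange).injective
    rw [LinearEquiv.apply_symm_apply]
    exact Subtype.ext (LinearMap.quotKerEquivRange_apply_mk (f := u) (x := x)).symm
  have := hα ⟨u x, LinearMap.mem_range_self u x⟩
  simp only [Submodule.coe_subtype] at this
  simpa [hδ, h2] using this

end Aux


/-- Affine case of Theorem 3.5: over a commutative noetherian ring, the module of
`R`-linear maps between two injective `R`-modules is flat and pure injective. -/
theorem flat_and_pureInjective_hom_of_injective
    (R : Type u) [CommRing R] [IsNoetherianRing R]
    (I J : Type u) [AddCommGroup I] [Module R I] [AddCommGroup J] [Module R J]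
    (hI : Module.Injective R I) (hJ : Module.Injective R J) :
    Module.Flat R (I →ₗ[R] J) ∧ IsPureInjective R (I →ₗ[R] J) := by
  constructor
  · rw [Module.Flat.iff_rTensor_injective']
    intro a
    have fin_a : Module.Finite R ↥a := ⟨IsNoetherian.noetherian ⊤⟩
    obtain ⟨n, p, hp⟩ := Module.Finite.exists_fin' R ↥a
    have fin_k : Module.Finite R ↥(LinearMap.ker p) := ⟨IsNoetherian.noetherian ⊤⟩
    obtain ⟨m, q, hq⟩ := Module.Finite.exists_fin' R ↥(LinearMap.ker p)
    set g : (Fin m → R) →ₗ[R] (Fin n → R) := (LinearMap.ker p).subtype ∘ₗ q with hg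
    have hrange : LinearMap.range g = LinearMap.ker p := by
      rw [hg, LinearMap.range_comp, LinearMap.range_eq_top.mpr hq, Submodule.map_top,
        Submodule.range_subtype]
    have hpg : p ∘ₗ g = 0 := by
      refine LinearMap.ext fun w => ?_
      have : g w ∈ LinearMap.ker p := hrange ▸ LinearMap.mem_range_self g w
      simpa using this
    have eta_inj : Function.Injective (etaMap (R := R) (I := I) (J := J) ↥a) := by
      rw [injective_iff_map_eq_zero]
      intro x hx
      obtain ⟨y, rfl⟩ := LinearMap.rTensor_surjective (I →ₗ[R] J) hp x
      have hβ : ∀ ψ : ↥a →ₗ[R] I, etaMap (Fin n → R) y (ψ ∘ₗ p) = 0 := by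
        intro ψ
        rw [← etaMap_natural p y ψ, hx, LinearMap.zero_apply]
      have hker : LinearMap.ker (LinearMap.lcomp R I g)
          ≤ LinearMap.ker (etaMap (Fin n → R) y) := by
        intro χ hχ
        have hχ' : χ ∘ₗ g = 0 := hχ
        have hker2 : LinearMap.ker p ≤ LinearMap.ker χ := by
          intro v hv
          rw [← hrange] at hv
          obtain ⟨w, rfl⟩ := hv
          exact LinearMap.congr_fun hχ' w
        obtain ⟨ψ, hψ⟩ := factor_through_surjective p hp χ hker2
        simp only [LinearMap.mem_ker]
        rw [← hψ]
        exact hβ ψ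
      obtain ⟨α, hα⟩ := factor_through_injective hJ (LinearMap.lcomp R I g)
        (etaMap (Fin n → R) y) hker
      have inj_n : Function.Injective (etaMap (R := R) (I := I) (J := J) (Fin n → R)) :=
        Function.LeftInverse.injective (theta_etaMap n)
      have key : LinearMap.rTensor (I →ₗ[R] J) g (thetaMap m α) = y := by
        apply inj_n
        refine LinearMap.ext fun χ => ?_
        rw [etaMap_natural g _ χ, eta_thetaMap]
        simpa [LinearMap.lcomp_apply'] using LinearMap.congr_fun hα χ
      rw [← key, ← LinearMap.rTensor_comp_apply, hpg, LinearMap.rTensor_zero,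
        LinearMap.zero_apply]
    rw [injective_iff_map_eq_zero]
    intro x hx
    apply eta_inj
    rw [map_zero]
    refine LinearMap.ext fun ψ => ?_
    obtain ⟨Ψ, hΨ⟩ := hI.out a.subtype (Submodule.injective_subtype _) ψ
    have hψ : Ψ ∘ₗ a.subtype = ψ := LinearMap.ext hΨ
    rw [LinearMap.zero_apply, ← hψ, ← etaMap_natural a.subtype x Ψ, hx, map_zero,
      LinearMap.zero_apply]
  · intro A B _ _ _ _ f hf g
    obtain ⟨h', hh'⟩ := hJ.out (LinearMap.lTensor I f) (hf.2 I) (TensorProduct.lift g.flip)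
    refine ⟨(TensorProduct.curry h').flip, ?_⟩
    refine LinearMap.ext fun a0 => ?_
    refine LinearMap.ext fun i => ?_
    simpa using hh' (i ⊗ₜ a0)
end

section
/- Let R be a commutative ring. Then R is noetherian if and only if every absolutely pure R-module is injective. -/
universe u

open TensorProduct

section Aux
variable {R : Type u} [CommRing R]

lemma evalCharacterHom_injective (M : Type u) [AddCommGroup M] [Module R M] :
    Function.Injective (evalCharacterHom R M) := by
  intro a b hab
  by_contra hne
  obtain ⟨c, hc⟩ := CharacterModule.exists_character_apply_ne_zero_of_ne_zero
    (sub_ne_zero.mpr hne)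
  apply hc
  have h0 : evalCharacterHom R M (a - b) = 0 := by rw [map_sub, hab, sub_self]
  calc c (a - b) = evalCharacterHom R M (a - b) c := rfl
    _ = 0 := by rw [h0]; rfl

/-- An injective module containing any given module. -/
abbrev EmbTarget (R : Type u) [CommRing R] (M : Type u)
    [AddCommGroup M] [Module R M] : Type u :=
  CharacterModule ((CharacterModule M) →₀ R)

lemma embTarget_injective (M : Type u) [AddCommGroup M] [Module R M] :
    Module.Injective R (EmbTarget R M) :=
  (Module.Flat.iff_characterModule_injective).mp inferInstance

noncomputable def embInj (R : Type u) [CommRing R] (M : Type u)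
    [AddCommGroup M] [Module R M] : M →ₗ[R] EmbTarget R M :=
  (CharacterModule.dual
      (Finsupp.linearCombination R (id : CharacterModule M → CharacterModule M))) ∘ₗ
    evalCharacterHom R M

lemma embInj_injective (M : Type u) [AddCommGroup M] [Module R M] :
    Function.Injective (embInj R M) := by
  rw [embInj, LinearMap.coe_comp]
  refine Function.Injective.comp ?_ (evalCharacterHom_injective M)
  intro φ ψ h
  apply CharacterModule.ext
  intro x
  have hx : Finsupp.linearCombination R (id : CharacterModule M → CharacterModule M)
      (Finsupp.single x 1) = x := by
    rw [Finsupp.linearCombination_single, one_smul]; rfl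
  have h2 := congrArg (fun c : CharacterModule ((CharacterModule M) →₀ R) =>
    c (Finsupp.single x 1)) h
  rw [← hx]
  exact h2

end Aux

section Aux2
open DirectSum
variable {R : Type u} [CommRing R]

lemma isPureMono_of_locallySplit {A B : Type u} [AddCommGroup A] [AddCommGroup B]
    [Module R A] [Module R B] (f : A →ₗ[R] B) (hf : Function.Injective f)
    (hsplit : ∀ s : Finset A, ∃ r : B →ₗ[R] A, ∀ a ∈ s, r (f a) = a) :
    IsPureMono f := by
  classical
  refine ⟨hf, fun Q _ _ => ?_⟩
  rw [← LinearMap.ker_eq_bot, LinearMap.ker_eq_bot']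
  intro t ht
  obtain ⟨S, hS⟩ := TensorProduct.exists_finset t
  obtain ⟨r, hr⟩ := hsplit (S.image Prod.snd)
  have key : LinearMap.lTensor Q (r ∘ₗ f) t = t := by
    rw [hS, map_sum]
    refine Finset.sum_congr rfl fun i hi => ?_
    rw [LinearMap.lTensor_tmul, LinearMap.comp_apply,
      hr i.2 (Finset.mem_image_of_mem _ hi)]
  rw [← key, LinearMap.lTensor_comp, LinearMap.comp_apply, ht, map_zero]

theorem absolutelyPure_injective_of_noetherian [IsNoetherianRing R]
    (M : Type u) [AddCommGroup M] [Module R M]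
    (habs : IsAbsolutelyPure R M) : Module.Injective R M := by
  apply Module.Baer.injective
  intro I g
  obtain ⟨n, c, hc⟩ :=
    Submodule.fg_iff_exists_fin_generating_family.mp (IsNoetherian.noetherian I)
  have hcI : ∀ i, c i ∈ I := fun i => hc ▸ Submodule.subset_span ⟨i, rfl⟩
  set ι := embInj R M with hι
  have hpure := habs (EmbTarget R M) ι (embInj_injective M)
  obtain ⟨G, hG⟩ := (embTarget_injective M).out I.subtype
    (fun a b hab => Subtype.ext hab) (ι ∘ₗ g)
  set e := G 1 with he
  have hGe : ∀ i, ι (g ⟨c i, hcI i⟩) = c i • e := by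
    intro i
    have h1 := hG ⟨c i, hcI i⟩
    have h2 : G (c i) = c i • e := by
      rw [he, ← map_smul, smul_eq_mul, mul_one]
    simp only [Submodule.coe_subtype, LinearMap.comp_apply] at h1
    rw [← h1, h2]
  -- the one-column matrix system
  set φ : R →ₗ[R] (Fin n → R) := LinearMap.toSpanSingleton R _ c with hφ
  set π := (LinearMap.range φ).mkQ with hπ
  set w : (Fin n → R) ⊗[R] M :=
    ∑ i, (Pi.single i 1 : Fin n → R) ⊗ₜ[R] g ⟨c i, hcI i⟩ with hw
  have hw0 : LinearMap.lTensor _ ι (LinearMap.rTensor M π w) = 0 := by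
    rw [hw, map_sum, map_sum]
    have : ∀ i : Fin n, LinearMap.lTensor _ ι (LinearMap.rTensor M π
        ((Pi.single i 1 : Fin n → R) ⊗ₜ[R] g ⟨c i, hcI i⟩)) =
        π (c i • (Pi.single i 1 : Fin n → R)) ⊗ₜ[R] e := by
      intro i
      rw [LinearMap.rTensor_tmul, LinearMap.lTensor_tmul, hGe i, map_smul,
        ← TensorProduct.smul_tmul, ← map_smul]
    rw [Finset.sum_congr rfl fun i _ => this i, ← TensorProduct.sum_tmul, ← map_sum]
    have hsum : (∑ i, c i • (Pi.single i 1 : Fin n → R)) = c := by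
      have : ∀ i : Fin n, c i • (Pi.single i 1 : Fin n → R) = Pi.single i (c i) := by
        intro i
        ext j
        simp [Pi.single_apply, mul_ite]
      rw [Finset.sum_congr rfl fun i _ => this i, Finset.univ_sum_single]
    rw [hsum]
    have : π c = 0 := by
      rw [hπ]
      rw [Submodule.mkQ_apply, Submodule.Quotient.mk_eq_zero]
      exact ⟨1, by rw [hφ]; simp [LinearMap.toSpanSingleton_apply]⟩
    rw [this, TensorProduct.zero_tmul]
  have ht0 : LinearMap.rTensor M π w = 0 :=
    hpure.2 _ (by rw [hw0, map_zero])
  have hexact := rTensor_exact (R := R) (N := Fin n → R) M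
    (LinearMap.exact_map_mkQ_range φ) (Submodule.mkQ_surjective _)
  obtain ⟨z, hz⟩ := (hexact w).mp ht0
  set m := TensorProduct.lid R M z with hm
  have hzeq : z = (1 : R) ⊗ₜ[R] m := by
    rw [hm, ← TensorProduct.lid_symm_apply, LinearEquiv.symm_apply_apply]
  have hwm : w = c ⊗ₜ[R] m := by
    rw [← hz, hzeq, LinearMap.rTensor_tmul]
    congr 1
    rw [hφ]
    simp [LinearMap.toSpanSingleton_apply]
  have hcomp : ∀ i, g ⟨c i, hcI i⟩ = c i • m := by
    intro i
    have := congrArg (fun x => TensorProduct.lid R M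
      (LinearMap.rTensor M (LinearMap.proj (R := R) (φ := fun _ : Fin n => R) i) x)) hwm
    simp only [hw, map_sum, LinearMap.rTensor_tmul, LinearMap.proj_apply,
      TensorProduct.lid_tmul, Pi.single_apply, ite_smul, one_smul, zero_smul] at this
    simpa using this
  refine ⟨LinearMap.toSpanSingleton R M m, ?_⟩
  intro x hx
  set d : ↥I →ₗ[R] M := g - (LinearMap.toSpanSingleton R M m) ∘ₗ I.subtype with hd
  have hdk : ∀ i : Fin n, (⟨c i, hcI i⟩ : ↥I) ∈ LinearMap.ker d := by
    intro i
    rw [LinearMap.mem_ker, hd, LinearMap.sub_apply, LinearMap.comp_apply,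
      Submodule.coe_subtype, LinearMap.toSpanSingleton_apply, hcomp i, sub_self]
  have hIle : I ≤ (LinearMap.ker d).map I.subtype := by
    conv_lhs => rw [← hc]
    rw [Submodule.span_le]
    rintro _ ⟨i, rfl⟩
    exact ⟨⟨c i, hcI i⟩, hdk i, rfl⟩
  obtain ⟨y, hy, hyx⟩ := hIle hx
  have hy2 : d ⟨x, hx⟩ = 0 := by
    have hy' : d y = 0 := LinearMap.mem_ker.mp hy
    rwa [show y = (⟨x, hx⟩ : ↥I) from Subtype.ext hyx] at hy'
  rw [hd, LinearMap.sub_apply, sub_eq_zero, LinearMap.comp_apply] at hy2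
  exact hy2.symm

/-- The tower of injective modules used in the converse direction. -/
abbrev ETower (R : Type u) [CommRing R] (F : ℕ →o Ideal R) (k : ℕ) : Type u :=
  EmbTarget R (R ⧸ F k)

set_option maxHeartbeats 1000000 in
theorem isNoetherianRing_of_absolutelyPure_injective
    (R : Type u) [CommRing R]
    (H : ∀ (M : Type u) [AddCommGroup M] [Module R M],
      IsAbsolutelyPure R M → Module.Injective R M) :
    IsNoetherianRing R := by
  classical
  rw [isNoetherianRing_iff, ← monotone_stabilizes_iff_noetherian]
  intro F
  let E := ETower R F
  have habs : IsAbsolutelyPure R (⨁ k, E k) := by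
    intro N _ _ f hf
    apply isPureMono_of_locallySplit f hf
    intro s
    set S : Finset ℕ := s.sup (fun a => DFinsupp.support a) with hS
    have hcomp : ∀ k : ℕ, ∃ gk : N →ₗ[R] E k,
        ∀ a : ⨁ k, E k, gk (f a) = DirectSum.component R ℕ E k a := by
      intro k
      obtain ⟨gk, hgk⟩ := (embTarget_injective (R ⧸ F k)).out f hf
        (DirectSum.component R ℕ E k)
      exact ⟨gk, hgk⟩
    choose gk hgk using hcomp
    refine ⟨∑ k ∈ S, (DirectSum.lof R ℕ E k) ∘ₗ gk k, fun a ha => ?_⟩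
    rw [LinearMap.sum_apply]
    simp only [LinearMap.comp_apply, hgk]
    have hsup : DFinsupp.support a ⊆ S :=
      Finset.le_sup (f := fun a : ⨁ k, E k => DFinsupp.support a) ha
    rw [← Finset.sum_subset hsup (fun k _ hk => by
      rw [← DirectSum.apply_eq_component, DFinsupp.notMem_support_iff.mp hk, map_zero])]
    rw [Finset.sum_congr rfl (fun k _ => by
      rw [DirectSum.lof_eq_of, ← DirectSum.apply_eq_component])]
    exact DirectSum.sum_support_of a
  have hMinj := H (⨁ k, E k) habs
  set I : Ideal R := ⨆ k, F k with hI
  set ψ : ∀ k : ℕ, R →ₗ[R] E k :=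
    fun k => embInj R (R ⧸ F k) ∘ₗ (F k).mkQ with hψdef
  have hψ0 : ∀ (x : R) (k : ℕ), x ∈ F k → ψ k x = 0 := by
    intro x k hx
    simp only [hψdef, LinearMap.comp_apply, Submodule.mkQ_apply]
    rw [(Submodule.Quotient.mk_eq_zero _).mpr hx, map_zero]
  have hfin : ∀ x : ↥I, ∃ B : ℕ, ∀ k, B ≤ k → ψ k (x : R) = 0 := by
    intro x
    obtain ⟨k0, hk0⟩ := (Submodule.mem_iSup_of_chain F (x : R)).mp x.2
    exact ⟨k0, fun k hk => hψ0 _ _ (F.monotone hk hk0)⟩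
  choose B hB using hfin
  have hmk : ∀ (x : ↥I) (k : ℕ),
      (DFinsupp.mk (Finset.range (B x)) (fun j => ψ j.1 (x : R)) : ⨁ k, E k) k
        = ψ k (x : R) := by
    intro x k
    rw [DFinsupp.mk_apply]
    split_ifs with hk
    · rfl
    · exact (hB x k (by simpa [Finset.mem_range, Nat.not_lt] using hk)).symm
  set h : ↥I →ₗ[R] ⨁ k, E k :=
    { toFun := fun x => DFinsupp.mk (Finset.range (B x)) (fun j => ψ j.1 (x : R))
      map_add' := fun x y => DFinsupp.ext fun k => by
        rw [DFinsupp.add_apply, hmk, hmk, hmk, Submodule.coe_add, map_add]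
      map_smul' := fun r x => DFinsupp.ext fun k => by
        rw [RingHom.id_apply, DFinsupp.smul_apply, hmk, hmk, Submodule.coe_smul,
          map_smul] } with hh
  have hhk : ∀ (x : ↥I) (k : ℕ), (h x) k = ψ k (x : R) := fun x k => hmk x k
  obtain ⟨Hh, hHh⟩ := hMinj.out I.subtype (fun a b hab => Subtype.ext hab) h
  set e : ⨁ k, E k := Hh 1 with he
  obtain ⟨B0, hB0⟩ : ∃ B0 : ℕ, ∀ k, B0 ≤ k → (e k : E k) = 0 := by
    refine ⟨(DFinsupp.support e).sup id + 1, fun k hk => ?_⟩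
    by_contra hne
    have hmem : k ∈ DFinsupp.support e := DFinsupp.mem_support_iff.mpr hne
    have := Finset.le_sup (f := id) hmem
    simp only [id] at this
    omega
  have hIle : ∀ k, B0 ≤ k → I ≤ F k := by
    intro k hk x hx
    have h1 : h ⟨x, hx⟩ = Hh x := (hHh ⟨x, hx⟩).symm
    have h2 : Hh x = x • e := by rw [he, ← map_smul, smul_eq_mul, mul_one]
    have h3 : ψ k x = 0 := by
      have hc2 := congrArg (fun v : ⨁ k, E k => v k) (h1.trans h2)
      simp only at hc2
      rw [hhk] at hc2
      rw [DFinsupp.smul_apply, hB0 k hk, smul_zero] at hc2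
      exact hc2
    have h4 : embInj R (R ⧸ F k) (Submodule.Quotient.mk x)
        = embInj R (R ⧸ F k) 0 := by
      rw [map_zero]
      simpa only [hψdef, LinearMap.comp_apply, Submodule.mkQ_apply] using h3
    have h5 := embInj_injective (R ⧸ F k) h4
    exact (Submodule.Quotient.mk_eq_zero _).mp h5
  refine ⟨B0, fun m hm => ?_⟩
  refine le_antisymm (F.monotone hm) ?_
  exact le_trans (le_iSup (fun k => F k) m) (hIle B0 le_rfl)

end Aux2

/-- Theorem 5.2 (affine case): a commutative ring is noetherian if and only if every
absolutely pure `R`-module is injective. -/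
theorem isNoetherianRing_iff_absolutelyPure_injective
    (R : Type u) [CommRing R] :
    IsNoetherianRing R ↔
      ∀ (M : Type u) [AddCommGroup M] [Module R M],
        IsAbsolutelyPure R M → Module.Injective R M := by
  constructor
  · intro hnoeth M _ _ habs
    exact absolutelyPure_injective_of_noetherian M habs
  · exact isNoetherianRing_of_absolutelyPure_injective R
end

section
/- Let R be a commutative noetherian ring and let I be a cochain complex of R-modules such that every component Iⁿ is an injective R-module and such that for every R-module Q the complex I ⊗_R Q is exact (i.e., I is pure acyclic). Then I is contractible: the identity map of the complex I is chain homotopic to the zero map. -/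
universe u

open TensorProduct

section PureAcyclicAux

open TensorProduct LinearMap

variable {R : Type u} [CommRing R]

/-- Separation by characters: if every character vanishing on `p` kills `v`, then `v ∈ p`. -/
private lemma PureAcyclic.mem_of_characters_vanish {M : Type u} [AddCommGroup M] [Module R M]
    (p : Submodule R M) (v : M)
    (h : ∀ Φ : CharacterModule M, (∀ w ∈ p, Φ w = 0) → Φ v = 0) : v ∈ p := by
  rw [← Submodule.Quotient.mk_eq_zero p]
  apply CharacterModule.eq_zero_of_character_apply
  intro c
  have hv := h (c.comp p.mkQ.toAddMonoidHom) ?_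
  · exact hv
  · intro w hw
    show c (p.mkQ w) = 0
    rw [Submodule.mkQ_apply, (Submodule.Quotient.mk_eq_zero p).mpr hw]
    exact map_zero c

/-- Characters factor through exact sequences. -/
private lemma PureAcyclic.char_factor_of_exact {A B C : Type u}
    [AddCommGroup A] [AddCommGroup B] [AddCommGroup C]
    [Module R A] [Module R B] [Module R C] {f : A →ₗ[R] B} {g : B →ₗ[R] C}
    (hfg : Function.Exact f g) (φ : CharacterModule B) (hφ : ∀ a, φ (f a) = 0) :
    ∃ ψ : CharacterModule C, ∀ b, ψ (g b) = φ b := by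
  classical
  set gZ : B →ₗ[ℤ] C := g.toAddMonoidHom.toIntLinearMap with hgZ
  set K : Submodule ℤ B := LinearMap.ker gZ with hKdef
  have hK : K ≤ LinearMap.ker (φ.toIntLinearMap) := by
    intro b hb
    have hb' : g b = 0 := hb
    obtain ⟨a, ha⟩ := (hfg b).mp hb'
    show φ b = 0
    rw [← ha]
    exact hφ a
  have hinj : Function.Injective (K.liftQ gZ le_rfl) :=
    LinearMap.ker_eq_bot.mp (Submodule.ker_liftQ_eq_bot _ _ _ le_rfl)
  obtain ⟨ψ, hψ⟩ := CharacterModule.dual_surjective_of_injective (K.liftQ gZ le_rfl) hinj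
    ((K.liftQ φ.toIntLinearMap hK).toAddMonoidHom)
  refine ⟨ψ, fun b => ?_⟩
  have h2 := DFunLike.congr_fun hψ (Submodule.Quotient.mk b)
  have h3 : (CharacterModule.dual (K.liftQ gZ le_rfl) ψ) (Submodule.Quotient.mk b)
      = ψ (g b) := by
    show ψ ((K.liftQ gZ le_rfl) (Submodule.Quotient.mk b)) = ψ (g b)
    rw [Submodule.liftQ_apply]
    rfl
  rw [h3] at h2
  exact h2

private lemma PureAcyclic.lid_lTensor {M N : Type u} [AddCommGroup M] [AddCommGroup N]
    [Module R M] [Module R N] (f : M →ₗ[R] N) (ξ : R ⊗[R] M) :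
    TensorProduct.lid R N (LinearMap.lTensor R f ξ) = f (TensorProduct.lid R M ξ) := by
  induction ξ using TensorProduct.induction_on with
  | zero => simp
  | tmul r x => simp
  | add a b ha hb => simp [ha, hb, map_add]

variable {I : ℤ → Type u} [∀ n, AddCommGroup (I n)] [∀ n, Module R (I n)]

/-- A pure acyclic complex is in particular exact. -/
private lemma PureAcyclic.exact_d (d : ∀ n : ℤ, I n →ₗ[R] I (n + 1))
    (hdd : ∀ n : ℤ, d (n + 1) ∘ₗ d n = 0)
    (hpure : ∀ (Q : Type u) [AddCommGroup Q] [Module R Q] (n : ℤ),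
      Function.Exact (LinearMap.lTensor Q (d n)) (LinearMap.lTensor Q (d (n + 1))))
    (n : ℤ) : Function.Exact (d n) (d (n + 1)) := by
  intro y
  constructor
  · intro hy
    have h1 : LinearMap.lTensor R (d (n+1)) ((1:R) ⊗ₜ[R] y) = 0 := by
      rw [LinearMap.lTensor_tmul, hy, tmul_zero]
    obtain ⟨ξ, hξ⟩ := (hpure R n _).mp h1
    refine ⟨TensorProduct.lid R (I n) ξ, ?_⟩
    have h2 := congrArg (TensorProduct.lid R (I (n+1))) hξ
    rw [PureAcyclic.lid_lTensor] at h2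
    simpa using h2
  · rintro ⟨x, rfl⟩
    show d (n+1) (d n x) = 0
    rw [← LinearMap.comp_apply, hdd n, LinearMap.zero_apply]

/-- Sections of the dual differential on the range of the dual differential:
the character-module dual of a pure acyclic complex is split exact. -/
private lemma PureAcyclic.tau_exists (d : ∀ n : ℤ, I n →ₗ[R] I (n + 1))
    (hdd : ∀ n : ℤ, d (n + 1) ∘ₗ d n = 0)
    (hpure : ∀ (Q : Type u) [AddCommGroup Q] [Module R Q] (n : ℤ),
      Function.Exact (LinearMap.lTensor Q (d n)) (LinearMap.lTensor Q (d (n + 1))))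
    (n : ℤ) :
    ∃ τ : ↥(LinearMap.range (CharacterModule.dual (d (n+1)))) →ₗ[R]
        CharacterModule (I (n+1+1)),
      ∀ y, CharacterModule.dual (d (n+1)) (τ y) = (y : CharacterModule (I (n+1))) := by
  classical
  set Y := LinearMap.range (CharacterModule.dual (d (n+1))) with hY
  set H : CharacterModule (↥Y ⊗[R] I (n+1)) := CharacterModule.uncurry Y.subtype with hH
  have hvan : ∀ t, H (LinearMap.lTensor (↥Y) (d n) t) = 0 := by
    intro t
    induction t using TensorProduct.induction_on with
    | zero => simp
    | tmul y x =>
      obtain ⟨φ₀, hφ₀⟩ := y.2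
      have hy : (y : CharacterModule (I (n+1))) (d n x) = 0 := by
        rw [← hφ₀]
        show φ₀ (d (n+1) (d n x)) = 0
        rw [← LinearMap.comp_apply, hdd n, LinearMap.zero_apply, map_zero]
      rw [LinearMap.lTensor_tmul]
      show H (y ⊗ₜ[R] d n x) = 0
      rw [hH]
      show (Y.subtype y) (d n x) = 0
      exact hy
    | add a b ha hb => rw [map_add, map_add, ha, hb, add_zero]
  obtain ⟨Ψ, hΨ⟩ := PureAcyclic.char_factor_of_exact (hpure (↥Y) n) H hvan
  refine ⟨CharacterModule.curry Ψ, fun y => ?_⟩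
  ext x
  show (CharacterModule.curry Ψ y) (d (n+1) x) = (y : CharacterModule (I (n+1))) x
  show Ψ (y ⊗ₜ[R] d (n+1) x) = _
  have h1 : (y ⊗ₜ[R] d (n+1) x : ↥Y ⊗[R] I (n+1+1))
      = LinearMap.lTensor (↥Y) (d (n+1)) (y ⊗ₜ[R] x) := by rw [LinearMap.lTensor_tmul]
  rw [h1, hΨ]
  show (Y.subtype y) x = _
  rfl

set_option maxHeartbeats 1000000 in
/-- The key purity lemma: an element of the kernel of the differential killed by a finitely
generated ideal `J` has a preimage under the differential which is also killed by `J`. -/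
private lemma PureAcyclic.lemA (d : ∀ n : ℤ, I n →ₗ[R] I (n + 1))
    (hdd : ∀ n : ℤ, d (n + 1) ∘ₗ d n = 0)
    (hpure : ∀ (Q : Type u) [AddCommGroup Q] [Module R Q] (n : ℤ),
      Function.Exact (LinearMap.lTensor Q (d n)) (LinearMap.lTensor Q (d (n + 1))))
    (J : Ideal R) (hJfg : J.FG) (n : ℤ)
    (z : I (n+1+1+1)) (hz : d (n+1+1+1) z = 0) (hJz : ∀ a ∈ J, a • z = 0) :
    ∃ x : I (n+1+1), d (n+1+1) x = z ∧ ∀ a ∈ J, a • x = 0 := by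
  classical
  obtain ⟨k, a, ha⟩ := Submodule.fg_iff_exists_fin_generating_family.mp hJfg
  have haJ : ∀ i, a i ∈ J := fun i => by
    rw [← ha]; exact Submodule.subset_span (Set.mem_range_self i)
  set W := ((I (n+1+1+1)) × (Fin k → I (n+1+1))) with hW
  set L : I (n+1+1) →ₗ[R] W :=
    LinearMap.prod (d (n+1+1)) (LinearMap.pi fun i => a i • LinearMap.id) with hL
  have key : ((z, 0) : W) ∈ LinearMap.range L := by
    apply PureAcyclic.mem_of_characters_vanish
    intro Φ hΦ
    set φ : CharacterModule (I (n+1+1+1)) := Φ.comp (AddMonoidHom.inl _ _) with hφdef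
    set ψ : Fin k → CharacterModule (I (n+1+1)) :=
      fun i => Φ.comp ((AddMonoidHom.inr _ _).comp
        (AddMonoidHom.single (fun _ : Fin k => I (n+1+1)) i)) with hψdef
    have hdec : ∀ (w : I (n+1+1+1)) (t : Fin k → I (n+1+1)),
        Φ (w, t) = φ w + ∑ i, ψ i (t i) := by
      intro w t
      have h1 : ((w, t) : W) = (w, 0) + (0, t) := by
        rw [Prod.mk_add_mk, add_zero, zero_add]
      have h2 : ((0, t) : W) = ∑ i : Fin k, ((0 : I (n+1+1+1)), Pi.single i (t i)) := by
        rw [Prod.ext_iff]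
        constructor
        · rw [Prod.fst_sum]
          simp
        · rw [Prod.snd_sum]
          funext j
          rw [Finset.sum_apply]
          exact (Fintype.sum_pi_single j t).symm
      rw [h1, map_add, h2, map_sum]
      rfl
    have hvan : ∀ x : I (n+1+1), φ (d (n+1+1) x) + ∑ i, ψ i (a i • x) = 0 := by
      intro x
      have h0 : Φ (L x) = 0 := hΦ (L x) ⟨x, rfl⟩
      have h1 : L x = ((d (n+1+1) x, fun i => a i • x) : W) := rfl
      rw [h1, hdec] at h0
      exact h0
    obtain ⟨τ', hτ'⟩ := PureAcyclic.tau_exists d hdd hpure n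
    obtain ⟨τ'', hτ''⟩ := PureAcyclic.tau_exists d hdd hpure (n+1)
    set ρ : CharacterModule (I (n+1+1)) →ₗ[R] CharacterModule (I (n+1+1)) :=
      LinearMap.id - τ' ∘ₗ (CharacterModule.dual (d (n+1))).rangeRestrict with hρdef
    have hρker : ∀ ψ₀ : CharacterModule (I (n+1+1)),
        CharacterModule.dual (d (n+1)) (ρ ψ₀) = 0 := by
      intro ψ₀
      rw [hρdef]
      rw [LinearMap.sub_apply, map_sub, LinearMap.id_apply, LinearMap.comp_apply]
      rw [hτ' ((CharacterModule.dual (d (n+1))).rangeRestrict ψ₀)]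
      rw [LinearMap.codRestrict_apply, sub_self]
    have hρrange : ∀ ψ₀ : CharacterModule (I (n+1+1)),
        ρ ψ₀ ∈ LinearMap.range (CharacterModule.dual (d (n+1+1))) := by
      intro ψ₀
      have hv : ∀ x : I (n+1), (ρ ψ₀) (d (n+1) x) = 0 := by
        intro x
        exact DFunLike.congr_fun (hρker ψ₀) x
      obtain ⟨Ψ, hΨ⟩ := PureAcyclic.char_factor_of_exact
        (PureAcyclic.exact_d d hdd hpure (n+1)) (ρ ψ₀) hv
      exact ⟨Ψ, by ext b; exact hΨ b⟩
    have hρfix : ∀ χ : CharacterModule (I (n+1+1)),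
        CharacterModule.dual (d (n+1)) χ = 0 → ρ χ = χ := by
      intro χ hχ
      rw [hρdef, LinearMap.sub_apply, LinearMap.id_apply, LinearMap.comp_apply]
      have h1 : (CharacterModule.dual (d (n+1))).rangeRestrict χ = 0 := by
        apply Subtype.ext
        rw [LinearMap.codRestrict_apply, hχ]
        rfl
      rw [h1, map_zero, sub_zero]
    have eval_sum : ∀ (x : I (n+1+1)) (c : Fin k → CharacterModule (I (n+1+1))),
        (∑ i, c i) x = ∑ i, (c i) x := by
      intro x c
      exact map_sum (evalCharacterHom R (I (n+1+1)) x) c Finset.univ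
    set χ : CharacterModule (I (n+1+1)) := CharacterModule.dual (d (n+1+1)) φ with hχdef
    have hχη : χ = ∑ i, a i • (-ψ i) := by
      ext x
      rw [eval_sum]
      have h2 : ∀ i : Fin k, (a i • (-ψ i)) x = -(ψ i (a i • x)) := by
        intro i
        rw [CharacterModule.smul_apply]
        rfl
      have h3 := hvan x
      have h4 : χ x = φ (d (n+1+1) x) := rfl
      rw [Finset.sum_congr rfl fun i _ => h2 i, Finset.sum_neg_distrib, h4]
      exact eq_neg_of_add_eq_zero_left h3
    obtain ⟨x₀, hx₀⟩ := (PureAcyclic.exact_d d hdd hpure (n+1+1) z).mp hz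
    choose φs hφs using fun i => hρrange (-(ψ i))
    have hχ0 : CharacterModule.dual (d (n+1)) χ = 0 := by
      ext x
      show φ (d (n+1+1) (d (n+1) x)) = 0
      rw [← LinearMap.comp_apply, hdd (n+1), LinearMap.zero_apply, map_zero]
    have hcomp : χ x₀ = 0 := by
      have e1 : χ = ∑ i, a i • (CharacterModule.dual (d (n+1+1)) (φs i)) := by
        calc χ = ρ χ := (hρfix χ hχ0).symm
          _ = ρ (∑ i, a i • (-ψ i)) := by rw [← hχη]
          _ = ∑ i, a i • ρ (-ψ i) := by
              rw [map_sum]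
              exact Finset.sum_congr rfl fun i _ => by rw [map_smul]
          _ = ∑ i, a i • (CharacterModule.dual (d (n+1+1)) (φs i)) :=
              Finset.sum_congr rfl fun i _ => by rw [hφs i]
      rw [e1, eval_sum]
      apply Finset.sum_eq_zero
      intro i _
      rw [CharacterModule.smul_apply]
      show φs i (d (n+1+1) (a i • x₀)) = 0
      rw [map_smul, hx₀, hJz (a i) (haJ i), map_zero]
    have hfz : φ z = χ x₀ := by rw [← hx₀]; rfl
    show φ z = 0
    rw [hfz]
    exact hcomp
  obtain ⟨x, hx⟩ := key
  have h1 : d (n+1+1) x = z := congrArg Prod.fst hx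
  have h2 : ∀ i, a i • x = 0 := fun i => congrFun (congrArg Prod.snd hx) i
  refine ⟨x, h1, fun b hb => ?_⟩
  have hle : J ≤ LinearMap.ker (LinearMap.toSpanSingleton R (I (n+1+1)) x) := by
    rw [← ha]
    apply Submodule.span_le.mpr
    rintro _ ⟨i, rfl⟩
    rw [SetLike.mem_coe, LinearMap.mem_ker, LinearMap.toSpanSingleton_apply]
    exact h2 i
  have hbx := hle hb
  rwa [LinearMap.mem_ker, LinearMap.toSpanSingleton_apply] at hbx

/-- Over a noetherian ring, the cycles of a pure acyclic complex of injectives are injective. -/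
private lemma PureAcyclic.injective_ker [IsNoetherianRing R]
    (d : ∀ n : ℤ, I n →ₗ[R] I (n + 1))
    (hdd : ∀ n : ℤ, d (n + 1) ∘ₗ d n = 0)
    (hinj : ∀ n : ℤ, Module.Injective R (I n))
    (hpure : ∀ (Q : Type u) [AddCommGroup Q] [Module R Q] (n : ℤ),
      Function.Exact (LinearMap.lTensor Q (d n)) (LinearMap.lTensor Q (d (n + 1))))
    (k : ℤ) : Module.Injective R ↥(LinearMap.ker (d k)) := by
  obtain ⟨n, rfl⟩ : ∃ n : ℤ, k = n + 1 + 1 := ⟨k - 1 - 1, by ring⟩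
  apply Module.Baer.injective
  intro J f
  have hJfg : J.FG := IsNoetherian.noetherian J
  obtain ⟨g, hg⟩ := (hinj (n+1+1)).out J.subtype (Submodule.injective_subtype J)
    ((LinearMap.ker (d (n+1+1))).subtype ∘ₗ f)
  set z : I (n+1+1+1) := d (n+1+1) (g 1) with hzdef
  have hz : d (n+1+1+1) z = 0 := by
    rw [hzdef, ← LinearMap.comp_apply, hdd (n+1+1), LinearMap.zero_apply]
  have hgJ : ∀ (b : R) (hb : b ∈ J),
      g b = ((f ⟨b, hb⟩ : ↥(LinearMap.ker (d (n+1+1)))) : I (n+1+1)) := by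
    intro b hb
    exact hg ⟨b, hb⟩
  have hJz : ∀ b ∈ J, b • z = 0 := by
    intro b hb
    have h1 : b • z = d (n+1+1) (g b) := by
      rw [hzdef, ← map_smul, ← map_smul, smul_eq_mul, mul_one]
    rw [h1, hgJ b hb]
    exact (f ⟨b, hb⟩).2
  obtain ⟨x, hx1, hx2⟩ := PureAcyclic.lemA d hdd hpure J hJfg n z hz hJz
  have hw : ∀ c : R,
      (LinearMap.toSpanSingleton R (I (n+1+1)) (g 1 - x)) c ∈ LinearMap.ker (d (n+1+1)) := by
    intro c
    rw [LinearMap.toSpanSingleton_apply, LinearMap.mem_ker, map_smul, map_sub, hx1, ← hzdef,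
      sub_self, smul_zero]
  refine ⟨LinearMap.codRestrict _ (LinearMap.toSpanSingleton R (I (n+1+1)) (g 1 - x)) hw, ?_⟩
  intro b hb
  apply Subtype.ext
  rw [LinearMap.codRestrict_apply, LinearMap.toSpanSingleton_apply]
  show b • (g 1 - x) = ((f ⟨b, hb⟩ : ↥(LinearMap.ker (d (n+1+1)))) : I (n+1+1))
  rw [smul_sub, hx2 b hb, sub_zero, ← map_smul, smul_eq_mul, mul_one, hgJ b hb]

end PureAcyclicAux

/-- Lemma 5.4 (module form): over a commutative noetherian ring, a pure acyclic cochain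
complex of injective modules is contractible, i.e. the identity is chain homotopic to zero. -/
theorem contractible_of_pure_acyclic_complex_of_injectives
    (R : Type u) [CommRing R] [IsNoetherianRing R]
    (I : ℤ → Type u) [∀ n, AddCommGroup (I n)] [∀ n, Module R (I n)]
    (d : ∀ n : ℤ, I n →ₗ[R] I (n + 1))
    (hdd : ∀ n : ℤ, d (n + 1) ∘ₗ d n = 0)
    (hinj : ∀ n : ℤ, Module.Injective R (I n))
    (hpure : ∀ (Q : Type u) [AddCommGroup Q] [Module R Q] (n : ℤ),
      Function.Exact (LinearMap.lTensor Q (d n)) (LinearMap.lTensor Q (d (n + 1)))) :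
    ∃ s : ∀ n : ℤ, I (n + 1) →ₗ[R] I n,
      ∀ n : ℤ, d n ∘ₗ s n + s (n + 1) ∘ₗ d (n + 1) = LinearMap.id := by
  classical
  have hZinj : ∀ k, Module.Injective R ↥(LinearMap.ker (d k)) :=
    PureAcyclic.injective_ker d hdd hinj hpure
  have hrex : ∀ k, ∃ r : I k →ₗ[R] ↥(LinearMap.ker (d k)),
      ∀ y : ↥(LinearMap.ker (d k)), r ((LinearMap.ker (d k)).subtype y) = y := fun k =>
    (hZinj k).out (LinearMap.ker (d k)).subtype (Submodule.injective_subtype _) LinearMap.id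
  choose r hr using hrex
  have hdmem : ∀ (k : ℤ) (x : I k), d k x ∈ LinearMap.ker (d (k+1)) := by
    intro k x
    rw [LinearMap.mem_ker, ← LinearMap.comp_apply, hdd k, LinearMap.zero_apply]
  let dbar : ∀ k : ℤ, I k →ₗ[R] ↥(LinearMap.ker (d (k+1))) := fun k =>
    LinearMap.codRestrict _ (d k) (hdmem k)
  have hdbar_val : ∀ (k : ℤ) (x : I k), ((dbar k x : I (k+1))) = d k x := fun k x => rfl
  have hsurj : ∀ (k : ℤ) (ζ : ↥(LinearMap.ker (d (k+1)))), ∃ x, dbar k x = ζ := by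
    intro k ζ
    obtain ⟨x, hx⟩ := (PureAcyclic.exact_d d hdd hpure k ζ.1).mp ζ.2
    exact ⟨x, Subtype.ext hx⟩
  have hσex : ∀ k : ℤ, ∃ σ : ↥(LinearMap.ker (d (k+1))) →ₗ[R] I k,
      ∀ x : I k, σ (dbar k x) = x - ((r k x : I k)) := by
    intro k
    set q : I k →ₗ[R] I k := LinearMap.id - (LinearMap.ker (d k)).subtype ∘ₗ r k with hq
    have hqker : LinearMap.ker (dbar k) ≤ LinearMap.ker q := by
      intro x hx
      have hxk : x ∈ LinearMap.ker (d k) := by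
        have h1 : ((dbar k x : I (k+1))) = ((0 : ↥(LinearMap.ker (d (k+1)))) : I (k+1)) :=
          congrArg _ hx
        rw [hdbar_val] at h1
        exact h1
      rw [LinearMap.mem_ker, hq, LinearMap.sub_apply, LinearMap.id_apply, LinearMap.comp_apply]
      have h2 : r k x = ⟨x, hxk⟩ := hr k ⟨x, hxk⟩
      rw [h2]
      exact sub_self x
    set lifted := (LinearMap.ker (dbar k)).liftQ (dbar k) le_rfl with hlifted
    have hbij : Function.Bijective lifted := by
      constructor
      · exact LinearMap.ker_eq_bot.mp (Submodule.ker_liftQ_eq_bot _ _ _ le_rfl)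
      · intro ζ
        obtain ⟨x, hx⟩ := hsurj k ζ
        exact ⟨Submodule.Quotient.mk x, by rw [hlifted, Submodule.liftQ_apply, hx]⟩
    set e := LinearEquiv.ofBijective lifted hbij with he
    refine ⟨((LinearMap.ker (dbar k)).liftQ q hqker) ∘ₗ e.symm.toLinearMap, fun x => ?_⟩
    have h3 : e (Submodule.Quotient.mk x) = dbar k x := by
      rw [he]
      show lifted (Submodule.Quotient.mk x) = dbar k x
      rw [hlifted, Submodule.liftQ_apply]
    rw [LinearMap.comp_apply]
    show (LinearMap.ker (dbar k)).liftQ q hqker (e.symm (dbar k x)) = _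
    rw [← h3, e.symm_apply_apply, Submodule.liftQ_apply, hq]
    rfl
  choose σ hσ using hσex
  refine ⟨fun k => σ k ∘ₗ r (k+1), fun k => ?_⟩
  ext x
  rw [LinearMap.add_apply, LinearMap.comp_apply, LinearMap.comp_apply, LinearMap.comp_apply,
    LinearMap.comp_apply, LinearMap.id_apply]
  have e2 : r (k+1+1) (d (k+1) x) = dbar (k+1) x := by
    have h1 : r (k+1+1) ((LinearMap.ker (d (k+1+1))).subtype ⟨d (k+1) x, hdmem (k+1) x⟩)
        = ⟨d (k+1) x, hdmem (k+1) x⟩ := hr (k+1+1) _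
    have h2 : (LinearMap.ker (d (k+1+1))).subtype ⟨d (k+1) x, hdmem (k+1) x⟩ = d (k+1) x := rfl
    rw [h2] at h1
    rw [h1]
    exact Subtype.ext rfl
  rw [e2, hσ (k+1) x]
  obtain ⟨x', hx'⟩ := hsurj k (r (k+1) x)
  have e1 : d k (σ k (r (k+1) x)) = ((r (k+1) x : I (k+1))) := by
    rw [← hx', hσ k x', map_sub]
    have h4 : d k ((r k x' : I k)) = 0 := (r k x').2
    rw [h4, sub_zero]
    have h5 : ((dbar k x' : I (k+1))) = ((r (k+1) x : I (k+1))) := congrArg _ hx'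
    rw [← hdbar_val k x', h5]
  rw [e1]
  exact add_sub_cancel _ x
end

section
/- Let R be a commutative ring and let f : A → B be a pure monomorphism of R-modules. Then the induced R-linear map f⁺ : B⁺ → A⁺ between character modules, given by precomposition with f, is a split epimorphism: it is surjective and admits an R-linear section. -/
universe u

open TensorProduct

namespace CharacterModule

/-- The section sends `φ ∈ A⁺` to `b ↦ ψ (φ ⊗ b)`, where `ψ ∈ (A⁺ ⊗ B)⁺` extends the evaluation
pairing `φ ⊗ a ↦ φ a` along the injection `A⁺ ⊗ A → A⁺ ⊗ B`; such `ψ` exists because `ℚ/ℤ` is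
injective. -/
theorem exists_dual_comp_eq_id_of_lTensor_injective {R A B : Type*} [CommRing R]
    [AddCommGroup A] [Module R A] [AddCommGroup B] [Module R B] (f : A →ₗ[R] B)
    (hf : Function.Injective (f.lTensor (CharacterModule A))) :
    ∃ s : CharacterModule A →ₗ[R] CharacterModule B, dual f ∘ₗ s = LinearMap.id := by
  obtain ⟨ψ, hψ⟩ := dual_surjective_of_injective _ hf (uncurry LinearMap.id)
  exact ⟨curry ψ, by ext φ a; exact DFunLike.congr_fun hψ (φ ⊗ₜ a)⟩

end CharacterModule

/-- If `f : A → B` is a pure monomorphism, then the induced map `f⁺ : B⁺ → A⁺` between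
character modules is a split epimorphism. -/
theorem characterModule_dual_split_epi_of_pureMono
    (R : Type u) [CommRing R]
    (A B : Type u) [AddCommGroup A] [Module R A] [AddCommGroup B] [Module R B]
    (f : A →ₗ[R] B) (hf : IsPureMono f) :
    Function.Surjective (CharacterModule.dual f) ∧
      ∃ s : CharacterModule A →ₗ[R] CharacterModule B,
        CharacterModule.dual f ∘ₗ s = LinearMap.id := by
  obtain ⟨s, hs⟩ := CharacterModule.exists_dual_comp_eq_id_of_lTensor_injective f (hf.2 _)
  exact ⟨LinearMap.surjective_of_comp_eq_id s _ hs, s, hs⟩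
end

section
/- Let R be a commutative noetherian ring and F a flat R-module. Then the double character module F⁺⁺ is a flat and pure injective R-module, the canonical evaluation map λ_F : F → F⁺⁺ is a pure monomorphism, and the quotient F⁺⁺/λ_F(F) is a flat R-module. In particular, every flat R-module is a pure submodule of a pure injective flat R-module with flat quotient. -/
universe u

open TensorProduct

/-!
Everything is read off the character duality `(-)⁺ = Hom_ℤ(-, ℚ/ℤ)`, which is exact and reflects
injectivity and surjectivity. Since `Hom_R(-, M⁺) = (- ⊗ M)⁺`, maps into character modules extend
along pure monomorphisms, and consequently a monomorphism `f` is pure exactly when `f⁺` is a split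
epimorphism. For `λ_F` the splitting is `λ_{F⁺}`; for a pure `f : A → B` with `B` flat, the
sequence `0 → (B/A)⁺ → B⁺ → A⁺ → 0` splits, so `(B/A)⁺` is a summand of the injective `B⁺`.

Noetherianity enters only in the flatness of `F⁺⁺ = (F⁺)⁺`, where `F⁺` is injective. For finitely
presented `P` the natural map `P ⊗ M⁺ → Hom(P, M)⁺` is injective: it is bijective for finite free
`P`, and both sides are right exact in `P`. For an ideal `I`, which is finitely presented, this
turns injectivity of `I ⊗ M⁺ → R ⊗ M⁺` into surjectivity of `Hom(R, M) → Hom(I, M)`.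
-/

open LinearMap

namespace CharacterModule

variable {R : Type*} [CommRing R] {A B C : Type*} [AddCommGroup A] [AddCommGroup B]
  [AddCommGroup C] [Module R A] [Module R B] [Module R C]

lemma dual_exact {f : A →ₗ[R] B} {g : B →ₗ[R] C} (h : Function.Exact f g) :
    Function.Exact (dual g) (dual f) := by
  intro c
  constructor
  · intro hc
    -- `c` kills `ker g = range f`, so it factors through `range g` and extends to `C`
    -- by divisibility of `ℚ/ℤ`.
    have hker : g.rangeRestrict.toAddMonoidHom.ker ≤ c.ker := by
      intro b hb
      obtain ⟨a, rfl⟩ := (h b).mp (congrArg Subtype.val hb)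
      exact DFunLike.congr_fun hc a
    obtain ⟨c', hc'⟩ := dual_surjective_of_injective (range g).subtype
      (Submodule.injective_subtype _)
      (g.rangeRestrict.toAddMonoidHom.liftOfSurjective g.surjective_rangeRestrict ⟨c, hker⟩)
    refine ⟨c', DFunLike.ext _ _ fun b ↦ ?_⟩
    exact (DFunLike.congr_fun hc' (g.rangeRestrict b)).trans
      (AddMonoidHom.liftOfRightInverse_comp_apply _ _ _ ⟨c, hker⟩ b)
  · rintro ⟨c', rfl⟩
    rw [← LinearMap.comp_apply, ← dual_comp, h.linearMap_comp_eq_zero, dual_zero,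
      LinearMap.zero_apply]

end CharacterModule

lemma Module.Baer.of_retract {R : Type*} [CommRing R] {B C : Type*} [AddCommGroup B]
    [AddCommGroup C] [Module R B] [Module R C] (hB : Module.Baer R B) (s : C →ₗ[R] B)
    (r : B →ₗ[R] C) (hrs : r ∘ₗ s = .id) : Module.Baer R C := by
  intro I g
  obtain ⟨g', hg'⟩ := hB I (s ∘ₗ g)
  refine ⟨r ∘ₗ g', fun x hx ↦ ?_⟩
  rw [comp_apply, hg' x hx]
  exact LinearMap.congr_fun hrs _

section TensorCharacter

variable {R : Type*} [CommRing R] {P Q M : Type*} [AddCommGroup P] [AddCommGroup Q]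
  [AddCommGroup M] [Module R P] [Module R Q] [Module R M]

variable (R P M) in
noncomputable def tensorCharacterToCharacterHom :
    P ⊗[R] CharacterModule M →ₗ[R] CharacterModule (P →ₗ[R] M) :=
  TensorProduct.lift <| LinearMap.mk₂ R (fun p c ↦ CharacterModule.dual (applyₗ p) c)
    (fun p p' c ↦ DFunLike.ext _ _ fun g ↦ by
      change c (g (p + p')) = c (g p) + c (g p'); rw [map_add, map_add])
    (fun r p c ↦ DFunLike.ext _ _ fun g ↦ by
      change c (g (r • p)) = c (r • g p); rw [map_smul])
    (fun _ _ _ ↦ rfl) (fun _ _ _ ↦ rfl)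

lemma tensorCharacterToCharacterHom_comp_rTensor (h : Q →ₗ[R] P) :
    tensorCharacterToCharacterHom R P M ∘ₗ h.rTensor (CharacterModule M) =
      CharacterModule.dual (h.lcomp R M) ∘ₗ tensorCharacterToCharacterHom R Q M := by
  ext q c g
  rfl

lemma tensorCharacterToCharacterHom_bijective {ι : Type*} [Fintype ι] (b : Module.Basis ι R P) :
    Function.Bijective (tensorCharacterToCharacterHom R P M) := by
  let σ : CharacterModule (P →ₗ[R] M) →ₗ[R] P ⊗[R] CharacterModule M :=
    ∑ i, TensorProduct.mk R P _ (b i) ∘ₗ CharacterModule.dual (smulRightₗ (M := M) (b.coord i))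
  refine Function.bijective_iff_has_inverse.mpr ⟨σ, fun x ↦ ?_, fun c ↦ ?_⟩
  · suffices σ ∘ₗ tensorCharacterToCharacterHom R P M = .id from LinearMap.congr_fun this x
    refine TensorProduct.ext' fun p c ↦ ?_
    have hcoord : ∀ i, CharacterModule.dual (smulRightₗ (M := M) (b.coord i))
        (tensorCharacterToCharacterHom R P M (p ⊗ₜ c)) = b.coord i p • c := fun i ↦ by
      ext m; rfl
    simp only [σ, coe_comp, coe_sum, Function.comp_apply, Finset.sum_apply, hcoord, mk_apply,
      TensorProduct.tmul_smul, TensorProduct.smul_tmul', ← TensorProduct.sum_tmul,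
      Module.Basis.coord_apply, b.sum_repr, id_apply]
  · have hsum : ∀ g : P →ₗ[R] M, ∑ i, (b.coord i).smulRight (g (b i)) = g := fun g ↦
      LinearMap.ext fun p ↦ by
        conv_rhs => rw [← b.sum_repr p, map_sum]
        simp only [coe_sum, Finset.sum_apply, coe_smulRight, Module.Basis.coord_apply, map_smul]
    ext g
    calc tensorCharacterToCharacterHom R P M (σ c) g
        = ∑ i, c ((b.coord i).smulRight (g (b i))) := by
          simp only [σ, coe_sum, Finset.sum_apply, map_sum]
          exact AddMonoidHom.finsetSum_apply _ _ _
      _ = c g := by rw [← map_sum, hsum]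

lemma tensorCharacterToCharacterHom_injective [Module.FinitePresentation R P] :
    Function.Injective (tensorCharacterToCharacterHom R P M) := by
  obtain ⟨n, m, π, d, hπ, hexact⟩ := Module.FinitePresentation.exists_fin' R P
  exact LinearMap.injective_of_surjective_of_injective_of_right_exact
    (d.rTensor _) (π.rTensor _) (CharacterModule.dual (d.lcomp R M))
    (CharacterModule.dual (π.lcomp R M)) (tensorCharacterToCharacterHom R _ M)
    (tensorCharacterToCharacterHom R _ M) (tensorCharacterToCharacterHom R P M)
    (tensorCharacterToCharacterHom_comp_rTensor d).symm
    (tensorCharacterToCharacterHom_comp_rTensor π).symm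
    (rTensor_exact _ hexact hπ)
    (CharacterModule.dual_exact (exact_lcomp_of_exact_of_surjective M hexact hπ))
    (tensorCharacterToCharacterHom_bijective (Pi.basisFun R (Fin m))).2
    (tensorCharacterToCharacterHom_bijective (Pi.basisFun R (Fin n))).1
    (LinearMap.rTensor_surjective _ hπ)

end TensorCharacter

lemma Module.Flat.characterModule_of_baer {R : Type*} [CommRing R] [IsNoetherianRing R]
    {M : Type*} [AddCommGroup M] [Module R M] (hM : Module.Baer R M) :
    Module.Flat R (CharacterModule M) := by
  rw [Module.Flat.iff_rTensor_injective']
  intro I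
  have hrestrict : Function.Surjective (I.subtype.lcomp R M) := fun g ↦
    let ⟨g', hg'⟩ := hM I g
    ⟨g', LinearMap.ext fun x ↦ hg' x x.2⟩
  have : Module.FinitePresentation R I := Module.finitePresentation_of_finite R I
  refine Function.Injective.of_comp (f := tensorCharacterToCharacterHom R R M) ?_
  rw [← LinearMap.coe_comp, tensorCharacterToCharacterHom_comp_rTensor]
  exact (CharacterModule.dual_injective_of_surjective _ hrestrict).comp
    tensorCharacterToCharacterHom_injective

section Purity

variable {R : Type u} [CommRing R]

lemma isPureInjective_characterModule (M : Type u) [AddCommGroup M] [Module R M] :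
    IsPureInjective R (CharacterModule M) := by
  intro A B _ _ _ _ f hf g
  have hinj : Function.Injective (f.rTensor M) := (f.lTensor_inj_iff_rTensor_inj M).mp (hf.2 M)
  exact rTensor_injective_iff_lcomp_surjective.mp hinj g

lemma dual_evalCharacterHom_comp_evalCharacterHom (M : Type u) [AddCommGroup M] [Module R M] :
    CharacterModule.dual (evalCharacterHom R M) ∘ₗ evalCharacterHom R (CharacterModule M) = .id :=
  rfl

lemma isPureMono_iff_exists_dual_comp_eq_id {A B : Type u} [AddCommGroup A] [AddCommGroup B]
    [Module R A] [Module R B] (f : A →ₗ[R] B) :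
    IsPureMono f ↔ ∃ s : CharacterModule A →ₗ[R] CharacterModule B,
      CharacterModule.dual f ∘ₗ s = .id := by
  constructor
  · intro hf
    obtain ⟨t, ht⟩ :=
      isPureInjective_characterModule (CharacterModule A) f hf (evalCharacterHom R A)
    refine ⟨CharacterModule.dual t ∘ₗ evalCharacterHom R (CharacterModule A), ?_⟩
    rw [← comp_assoc, ← CharacterModule.dual_comp, ht,
      dual_evalCharacterHom_comp_evalCharacterHom]
  · rintro ⟨s, hs⟩
    refine ⟨CharacterModule.dual_surjective_iff_injective.mp fun c ↦
      ⟨s c, LinearMap.congr_fun hs c⟩, fun Q _ _ ↦ ?_⟩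
    rw [f.lTensor_inj_iff_rTensor_inj Q, rTensor_injective_iff_lcomp_surjective]
    intro h
    -- Transpose `h : A → Q⁺` to `Q → A⁺`, lift it along `f⁺` with `s`, and transpose back.
    refine ⟨CharacterModule.dual (s ∘ₗ CharacterModule.dual h ∘ₗ evalCharacterHom R Q) ∘ₗ
      evalCharacterHom R B, ?_⟩
    ext a q
    exact DFunLike.congr_fun (LinearMap.congr_fun hs _) a

lemma isPureMono_evalCharacterHom (M : Type u) [AddCommGroup M] [Module R M] :
    IsPureMono (evalCharacterHom R M) :=
  (isPureMono_iff_exists_dual_comp_eq_id _).mpr ⟨_, dual_evalCharacterHom_comp_evalCharacterHom M⟩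

lemma IsPureMono.flat_quotient_range {A B : Type u} [AddCommGroup A] [AddCommGroup B]
    [Module R A] [Module R B] {f : A →ₗ[R] B} (hf : IsPureMono f) (hB : Module.Flat R B) :
    Module.Flat R (B ⧸ range f) := by
  rw [Module.Flat.iff_characterModule_baer] at hB ⊢
  obtain ⟨s, hs⟩ := (isPureMono_iff_exists_dual_comp_eq_id f).mp hf
  have hexact := CharacterModule.dual_exact (LinearMap.exact_map_mkQ_range f)
  have hinj := CharacterModule.dual_injective_of_surjective _ (range f).mkQ_surjective
  have hsplit := (hexact.split_tfae'.out 0 1).mp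
  obtain ⟨-, r, hr⟩ := hsplit ⟨hinj, s, hs⟩
  exact hB.of_retract _ r hr

end Purity

/-- The sequence (3.1) in the proof of Proposition 3.7: over a commutative noetherian ring,
for a flat module `F`, the double character module `F⁺⁺` is flat and pure injective, the
evaluation map `λ_F : F → F⁺⁺` is a pure monomorphism, and the quotient `F⁺⁺/λ_F(F)` is flat. -/
theorem flat_purely_embeds_in_pureInjective_flat_with_flat_quotient
    (R : Type u) [CommRing R] [IsNoetherianRing R]
    (F : Type u) [AddCommGroup F] [Module R F] (hF : Module.Flat R F) :
    Module.Flat R (CharacterModule (CharacterModule F)) ∧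
    IsPureInjective R (CharacterModule (CharacterModule F)) ∧
    IsPureMono (evalCharacterHom R F) ∧
    Module.Flat R
      (CharacterModule (CharacterModule F) ⧸ LinearMap.range (evalCharacterHom R F)) := by
  have hflat := Module.Flat.characterModule_of_baer (Module.Flat.iff_characterModule_baer.mp hF)
  have hpure := isPureMono_evalCharacterHom (R := R) F
  exact ⟨hflat, isPureInjective_characterModule _, hpure, hpure.flat_quotient_range hflat⟩
end
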